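/- Let M be a loopfree matroid on finite ground set E with rank(M) ≥ 2, and let H_G := U_{|G|,G} ⊕ U_{|G^c|−1,G^c} be a corank-one matroid on E (|G| ≤ |E|−2). Then the matroid intersection M ∧ H_G has a loop if and only if M has a rank-one flat F with F ∪ G = E. -/

import Mathlib

open Matroid Set
open scoped Classical

variable {α : Type*}

/-- A circuit of a matroid: a minimal dependent set. -/
def Matroid.Circuit' (M : Matroid α) (C : Set α) : Prop :=
  M.Dep C ∧ ∀ D, D ⊂ C → M.Indep D

/-- The cyclic part `cyc_M(F)` of a set `F`: the union of all circuits of `M` contained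
in `F`. -/
def Matroid.cyc (M : Matroid α) (F : Set α) : Set α :=
  ⋃₀ {C | M.Circuit' C ∧ C ⊆ F}

/-- The (extended) rank of a set in a matroid: the supremum of the cardinalities of the
independent subsets. -/
noncomputable def Matroid.eRk' (M : Matroid α) (X : Set α) : ℕ∞ :=
  ⨆ I ∈ {I | M.Indep I ∧ I ⊆ X}, I.encard

/-- The rank of a matroid. -/
noncomputable def Matroid.rk' (M : Matroid α) : ℕ∞ := M.eRk' M.E

/-- A matroid is loopfree if every element of the ground set is independent. -/
def Matroid.Loopless' (M : Matroid α) : Prop := ∀ e ∈ M.E, M.Indep {e}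

/-- `U` is the matroid union `M ∨ N`: its independent sets are exactly the unions of an
independent set of `M` and an independent set of `N`. -/
def IsMatroidUnion (M N U : Matroid α) : Prop :=
  U.E = M.E ∧ ∀ X, U.Indep X ↔ ∃ I J, M.Indep I ∧ N.Indep J ∧ X = I ∪ J

/-- `P` is the matroid intersection `M ∧ N := (M* ∨ N*)*`. -/
def IsMatroidInter (M N P : Matroid α) : Prop :=
  ∃ U, IsMatroidUnion M✶ N✶ U ∧ P = U✶

/-- Contraction of a set in a matroid, defined by duality: `M/A = (M* \ A)*`. -/
def Matroid.contract' (M : Matroid α) (A : Set α) : Matroid α := (M✶ ↾ (M.E \ A))✶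

/-- A cyclic flat: a flat which is the union of the circuits contained in it. -/
def Matroid.CyclicFlat (M : Matroid α) (F : Set α) : Prop :=
  M.IsFlat F ∧ F = M.cyc F

/-- A nested matroid: one whose cyclic flats form a chain under inclusion. -/
def Matroid.Nested (M : Matroid α) : Prop := IsChain (· ⊆ ·) {F | M.CyclicFlat F}

/-- `U` is the uniform matroid of rank `r` on the ground set `S`: its bases are exactly the
`r`-element subsets of `S`. -/
def IsUnifOn (S : Set α) (r : ℕ) (U : Matroid α) : Prop :=
  U.E = S ∧ ∀ B, U.IsBase B ↔ B ⊆ S ∧ B.encard = r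

/-- `H` is the corank-one matroid `H_G := U_{|G|,G} ⊕ U_{|Gᶜ|-1,Gᶜ}` on the ground set
`univ` whose set of coloops is `G`. -/
def IsHG (G : Set α) (H : Matroid α) : Prop :=
  ∃ (U' : Matroid α) (hd : Disjoint (Matroid.freeOn G).E U'.E),
    IsUnifOn Gᶜ (Gᶜ.ncard - 1) U' ∧ H = (Matroid.freeOn G).disjointSum U' hd

/-- `P` is the iterated matroid intersection of a list of matroids (the empty intersection
being the free matroid `U_{n,n}` on the ground set `univ`). -/
def IsFoldInter : List (Matroid α) → Matroid α → Prop
  | [], P => P = Matroid.freeOn Set.univ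
  | M :: l, P => ∃ Q, IsFoldInter l Q ∧ IsMatroidInter M Q P

/-! The dual of `H_G` is the rank-one uniform matroid on `Gᶜ` plus loops on `G`, so a loop `e`
of `P = (M✶ ∨ H_G✶)✶` is a coloop of `U = M✶ ∨ H_G✶`. If some `f ∈ Gᶜ` were not parallel to
`e`, then extending `{e, f}` to a base `B` of `M` would make `(E \ B) ∪ {e, f}` independent in `U`,
one element more than `r(M✶) + 1` allows. Conversely, if all of `Gᶜ` is parallel to some
`e ∈ Gᶜ`, the `H_G✶`-part `{f}` of a `U`-independent set avoiding `e` can be moved into its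
`M✶`-part, which leaves room to add `e`; so `e` is a coloop of `U`. -/

namespace Matroid

variable {M : Matroid α} {X F I : Set α} {e f : α}

lemma loopless'_iff : M.Loopless' ↔ M.Loopless := by
  simp only [Loopless', indep_singleton, loopless_iff_forall_isNonloop]

lemma eRk'_eq_eRk (M : Matroid α) (X : Set α) : M.eRk' X = M.eRk X := by
  refine le_antisymm (iSup₂_le fun I hI ↦ hI.1.encard_le_eRk_of_subset hI.2) ?_
  obtain ⟨I, hI⟩ := M.exists_isBasis' X
  rw [← hI.encard_eq_eRk]
  exact le_iSup₂ (f := fun I (_ : I ∈ {I | M.Indep I ∧ I ⊆ X}) ↦ I.encard) I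
    ⟨hI.indep, hI.subset⟩

lemma eRk_eq_one_of_subset [M.Loopless] (hF : M.eRk F = 1) (hXF : X ⊆ F) (hX : X.Nonempty)
    (hXE : X ⊆ M.E) : M.eRk X = 1 := by
  obtain ⟨x, hx⟩ := hX
  refine le_antisymm (hF ▸ M.eRk_mono hXF) ?_
  rw [← (M.isNonloop_of_loopless (hXE hx)).eRk_eq]
  exact M.eRk_mono (singleton_subset_iff.2 hx)

lemma Coindep.insert_of_mem_closure_singleton (hI : M.Coindep I) (heI : e ∉ I) (hfe : f ≠ e)
    (hf : f ∈ M.closure {e}) : M.Coindep (insert f I) := by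
  have hfE : f ∈ M.E := M.closure_subset_ground _ hf
  have hsub : insert f I ⊆ M.E := insert_subset hfE hI.subset_ground
  rw [coindep_iff_closure_compl_eq_ground hsub, ← union_singleton, ← sdiff_sdiff,
    closure_sdiff_singleton_eq_closure, hI.closure_compl]
  rw [← closure_inter_ground] at hf
  refine M.closure_subset_closure ?_ hf
  rintro x ⟨rfl, hxE⟩
  exact ⟨⟨hxE, heI⟩, hfe.symm⟩

lemma disjointSum_freeOn_dual_indep_iff {J : Set α} {N : Matroid α}
    (h : Disjoint (freeOn X).E N.E) : ((freeOn X).disjointSum N h)✶.Indep J ↔ N✶.Indep J := by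
  have hXN : Disjoint X N.E := h
  simp only [dual_indep_iff_exists', disjointSum_ground_eq, freeOn_ground,
    disjointSum_isBase_iff, freeOn_isBase_iff]
  constructor
  · rintro ⟨hJ, B, ⟨hBX, hB, -⟩, hJB⟩
    have hJN : J ⊆ N.E := fun x hx ↦ (hJ hx).resolve_left fun hxX ↦
      hJB.notMem_of_mem_left hx (inter_eq_right.1 hBX hxX)
    exact ⟨hJN, B ∩ N.E, hB, hJB.mono_right inter_subset_left⟩
  · rintro ⟨hJN, K, hK, hJK⟩
    have hKN := hK.subset_ground
    refine ⟨hJN.trans subset_union_right, X ∪ K,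
      ⟨union_inter_cancel_left, ?_, union_subset_union_right _ hKN⟩,
      disjoint_union_right.2 ⟨(hXN.mono_right hJN).symm, hJK⟩⟩
    rwa [union_inter_distrib_right, hXN.inter_eq, inter_eq_left.2 hKN, empty_union]

end Matroid

lemma IsUnifOn.dual_indep_iff {S J : Set α} {U : Matroid α} (hU : IsUnifOn S (S.ncard - 1) U)
    (hS : S.Finite) : U✶.Indep J ↔ J ⊆ S ∧ J.encard ≤ 1 := by
  obtain ⟨hUE, hUB⟩ := hU
  constructor
  · intro hJ
    obtain ⟨hJS, B, hB, hJB⟩ := dual_indep_iff_exists'.1 hJ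
    rw [hUE] at hJS
    obtain ⟨hBS, hBcard⟩ := (hUB B).1 hB
    have hcompl : (S \ B).encard ≤ 1 := by
      have h := encard_sdiff_add_encard_of_subset hBS
      rw [← (hS.sdiff (t := B)).cast_ncard_eq] at h ⊢
      rw [hBcard, ← hS.cast_ncard_eq] at h
      norm_cast at h ⊢
      omega
    exact ⟨hJS, (encard_le_encard (subset_sdiff.2 ⟨hJS, hJB⟩)).trans hcompl⟩
  · rintro ⟨hJS, hJ1⟩
    obtain rfl | ⟨f, rfl⟩ := encard_le_one_iff_eq.1 hJ1
    · exact U✶.empty_indep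
    have hfS := singleton_subset_iff.1 hJS
    have hB : U.IsBase (S \ {f}) := by
      refine (hUB _).2 ⟨sdiff_subset, ?_⟩
      rw [encard_sdiff_singleton_of_mem hfS, ← hS.cast_ncard_eq, ENat.natCast_sub, Nat.cast_one]
    simpa [hUE, hfS] using hB.compl_isBase_dual.indep

lemma IsHG.dual_indep_iff [Finite α] {G J : Set α} {H : Matroid α} (hH : IsHG G H) :
    H✶.Indep J ↔ J ⊆ Gᶜ ∧ J.encard ≤ 1 := by
  obtain ⟨U', hd, hU', rfl⟩ := hH
  rw [disjointSum_freeOn_dual_indep_iff, hU'.dual_indep_iff (toFinite _)]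

section union

variable {M N U : Matroid α} {S : Set α} {e f : α}

lemma IsMatroidUnion.mem_closure_of_isColoop [M.Finite] (hU : IsMatroidUnion M✶ N U)
    (hN : ∀ J, N.Indep J → J.encard ≤ 1) (hf : N.Indep {f}) (he : M.IsNonloop e)
    (hcol : U.IsColoop e) : f ∈ M.closure {e} := by
  by_contra hfe
  have hfE : f ∈ M.E := by
    have hUf : U.Indep {f} := (hU.2 _).2 ⟨∅, {f}, M✶.empty_indep, hf, (empty_union _).symm⟩
    simpa [hU.1] using hUf.subset_ground
  obtain ⟨B, hB, hfeB⟩ := (he.indep.insert_indep_iff.2 (Or.inl ⟨hfE, hfe⟩)).exists_isBase_superset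
  have hB' := hB.compl_isBase_dual
  have hBf : U.Indep (M.E \ B ∪ {f}) := (hU.2 _).2 ⟨M.E \ B, {f}, hB'.indep, hf, rfl⟩
  obtain ⟨BU, hBU, hsub⟩ := hBf.exists_isBase_superset
  obtain ⟨I, J, hI, hJ, rfl⟩ := (hU.2 BU).1 hBU.indep
  have hfB : f ∈ B := hfeB (mem_insert _ _)
  have heB : e ∈ B := hfeB (by simp)
  have hef : e ≠ f := by
    rintro rfl
    exact hfe (M.mem_closure_of_mem' rfl)
  have hcount : (M.E \ B).encard + 2 ≤ (M.E \ B).encard + 1 := calc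
    (M.E \ B).encard + 2 = (insert e (M.E \ B ∪ {f})).encard := by
      rw [encard_insert_of_notMem (by simp [hef, heB]), union_singleton,
        encard_insert_of_notMem (by simp [hfB]), add_assoc, one_add_one_eq_two]
    _ ≤ (I ∪ J).encard := encard_le_encard (insert_subset (hcol.mem_of_isBase hBU) hsub)
    _ ≤ I.encard + J.encard := encard_union_le I J
    _ ≤ (M.E \ B).encard + 1 :=
      add_le_add (hB'.encard_eq_eRank ▸ hI.encard_le_eRank) (hN J hJ)
  have hfin : (M.E \ B).encard ≠ ⊤ := M.ground_finite.sdiff.encard_lt_top.ne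
  exact (by norm_num : ¬ (2 : ℕ∞) ≤ 1) ((ENat.add_le_add_iff_left hfin).1 hcount)

lemma IsMatroidUnion.isColoop_of_subset_closure (hU : IsMatroidUnion M✶ N U)
    (hN : ∀ J, N.Indep J ↔ J ⊆ S ∧ J.encard ≤ 1) (heS : e ∈ S) (hS : S ⊆ M.closure {e}) :
    U.IsColoop e := by
  have heN : N.Indep {e} := (hN _).2 ⟨singleton_subset_iff.2 heS, by simp⟩
  rw [isColoop_iff_forall_mem_isBase]
  intro B hB
  by_contra heB
  obtain ⟨I, J, hI, hJ, rfl⟩ := (hU.2 _).1 hB.indep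
  have heE : e ∈ U.E := by simpa [hU.1] using M.closure_subset_ground _ (hS heS)
  refine (hB.insert_dep ⟨heE, heB⟩).not_indep ((hU.2 _).2 ?_)
  obtain ⟨hJS, hJ1⟩ := (hN J).1 hJ
  obtain rfl | ⟨f, rfl⟩ := encard_le_one_iff_eq.1 hJ1
  · exact ⟨I, {e}, hI, heN, by rw [union_empty, union_singleton]⟩
  · have hfe : f ≠ e := by rintro rfl; simp at heB
    have hIf : M✶.Indep (insert f I) :=
      Coindep.insert_of_mem_closure_singleton hI (fun h ↦ heB (Or.inl h)) hfe
        (hS (singleton_subset_iff.1 hJS))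
    exact ⟨insert f I, {e}, hIf, heN, by ext; simp⟩

end union

theorem matroidInter_HG_hasLoop_iff_general [Fintype α] (M H P : Matroid α) (G : Set α)
    (hME : M.E = Set.univ) (hMl : M.Loopless')
    (hG : G.ncard ≤ Fintype.card α - 2) (hH : IsHG G H)
    (hP : IsMatroidInter M H P) :
    (∃ e, P.Dep {e}) ↔ ∃ F, M.IsFlat F ∧ M.eRk' F = 1 ∧ F ∪ G = Set.univ := by
  obtain ⟨U, hU, rfl⟩ := hP
  have : M.Loopless := loopless'_iff.1 hMl
  have hN (J : Set α) : H✶.Indep J ↔ J ⊆ Gᶜ ∧ J.encard ≤ 1 := hH.dual_indep_iff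
  simp_rw [singleton_dep, dual_isLoop_iff_isColoop, eRk'_eq_eRk,
    union_comm _ G, ← compl_subset_iff_union]
  constructor
  · rintro ⟨e, he⟩
    have hne : M.IsNonloop e := M.isNonloop_of_loopless (hME ▸ mem_univ e)
    refine ⟨M.closure {e}, M.isFlat_closure _, by rw [M.eRk_closure_eq, hne.eRk_eq], ?_⟩
    exact fun f hf ↦ hU.mem_closure_of_isColoop (fun J hJ ↦ ((hN J).1 hJ).2)
      ((hN {f}).2 ⟨singleton_subset_iff.2 hf, by simp⟩) hne he
  · rintro ⟨F, -, hF, hGF⟩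
    have hGc : Gᶜ.Nonempty := by
      obtain ⟨x, -⟩ : F.Nonempty := nonempty_iff_ne_empty.2 (by rintro rfl; simp at hF)
      refine nonempty_compl.2 fun hGu ↦ ?_
      rw [hGu, ncard_univ, Nat.card_eq_fintype_card] at hG
      have := Fintype.card_pos_iff.2 ⟨x⟩
      omega
    have hGcE : Gᶜ ⊆ M.E := hME ▸ subset_univ _
    obtain ⟨e, heG, -, hGe⟩ :=
      (M.eRk_eq_one_iff hGcE).1 (M.eRk_eq_one_of_subset hF hGF hGc hGcE)
    exact ⟨e, hU.isColoop_of_subset_closure hN heG hGe⟩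

/-- For a loopfree matroid `M` of rank at least `2` and a corank-one matroid `H_G`, the
matroid intersection `M ∧ H_G` has a loop if and only if `M` has a rank-one flat `F`
with `F ∪ G = E`. -/
theorem matroidInter_HG_hasLoop_iff [Fintype α] (M H P : Matroid α) (G : Set α)
    (hME : M.E = Set.univ) (hMl : M.Loopless') (hMr : (2 : ℕ∞) ≤ M.rk')
    (hG : G.ncard ≤ Fintype.card α - 2) (hH : IsHG G H)
    (hP : IsMatroidInter M H P) :
    (∃ e, P.Dep {e}) ↔ ∃ F, M.IsFlat F ∧ M.eRk' F = 1 ∧ F ∪ G = Set.univ :=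
  matroidInter_HG_hasLoop_iff_general M H P G hME hMl hG hH hP
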